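/- There is no perfectly replicable algorithm for estimating the bias of a coin to within ε < 1/4: for any n ∈ ℕ, there is no function assigning to each bias b ∈ [0,1] a canonical value v_b with |v_b − b| ≤ ε such that some randomized algorithm A on n i.i.d. Bern(b) samples outputs v_b with probability at least 2/3 for every b ∈ [0,1]. -/

import Mathlib

open MeasureTheory ENNReal NNReal

/-- The Bernoulli distribution on `Bool` with success probability `p`. -/
noncomputable def bern (p : ℝ) : Measure Bool :=
  ENNReal.ofReal p • Measure.dirac true + ENNReal.ofReal (1 - p) • Measure.dirac false

/-- The distribution of `n` i.i.d. tosses of a coin with bias `p`. -/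
noncomputable def bernPow (p : ℝ) (n : ℕ) : Measure (Fin n → Bool) :=
  Measure.pi fun _ => bern p

lemma bern_singleton (b : ℝ) (x : Bool) :
    bern b {x} = (Real.toNNReal (if x then b else 1 - b) : ℝ≥0∞) := by
  cases x <;> simp [bern, ENNReal.ofReal]

lemma bern_prob {b : ℝ} (h0 : 0 ≤ b) (h1 : b ≤ 1) : IsProbabilityMeasure (bern b) := by
  constructor
  simp [bern, ← ENNReal.ofReal_add h0 (by linarith : (0:ℝ) ≤ 1 - b)]

instance bern_finite (b : ℝ) : IsFiniteMeasure (bern b) := by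
  constructor
  simp only [bern, Measure.coe_add, Measure.coe_smul, Pi.add_apply, Pi.smul_apply,
    smul_eq_mul]
  simp [ENNReal.ofReal_lt_top, ENNReal.add_lt_top]

lemma bernPow_singleton (b : ℝ) (n : ℕ) (s : Fin n → Bool) :
    bernPow b n {s} = ∏ i, bern b {s i} := by
  rw [bernPow, ← Set.univ_pi_singleton s, Measure.pi_pi]

lemma bernPow_prob {b : ℝ} (h0 : 0 ≤ b) (h1 : b ≤ 1) (n : ℕ) :
    IsProbabilityMeasure (bernPow b n) := by
  have := bern_prob h0 h1
  exact MeasureTheory.Measure.pi.instIsProbabilityMeasure _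

theorem stmt18 (ε : ℝ) (hε0 : 0 ≤ ε) (hε : ε < 1 / 4) (n : ℕ) :
    ¬ ∃ (v : ℝ → ℝ) (A : (Fin n → Bool) → Measure ℝ),
        Measurable A ∧ (∀ s, IsProbabilityMeasure (A s)) ∧
        ∀ b ∈ Set.Icc (0 : ℝ) 1,
          |v b - b| ≤ ε ∧ (2 / 3 : ℝ≥0∞) ≤ ((bernPow b n).bind A) {v b} := by
  rintro ⟨v, A, hA, hAp, h⟩
  -- the probability of outputting x on bias b
  set g : ℝ → ℝ → ℝ≥0∞ := fun x b => ((bernPow b n).bind A) {x} with hgdef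
  have hg : ∀ x b, g x b = ∑ s : Fin n → Bool, A s {x} * bernPow b n {s} := by
    intro x b
    rw [hgdef]
    simp only
    rw [Measure.bind_apply (measurableSet_singleton x) hA.aemeasurable, lintegral_fintype]
  -- continuity of g x
  have hcont : ∀ x, Continuous (g x) := by
    intro x
    have : (g x) = fun b => ∑ s : Fin n → Bool,
        A s {x} * ((∏ i, Real.toNNReal (if s i then b else 1 - b) : ℝ≥0) : ℝ≥0∞) := by
      funext b
      rw [hg]
      congr 1
      funext s
      rw [bernPow_singleton]
      congr 1
      push_cast
      exact Finset.prod_congr rfl fun i _ => bern_singleton b (s i)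
    rw [this]
    apply continuous_finset_sum
    intro s _
    apply ENNReal.continuous_const_mul (measure_ne_top _ _) |>.comp
    apply ENNReal.continuous_coe.comp
    apply continuous_finset_prod
    intro i _
    cases s i
    · simpa [Function.comp_def] using continuous_real_toNNReal.comp
        (continuous_const.sub continuous_id : Continuous fun b : ℝ => 1 - b)
    · simpa using continuous_real_toNNReal.comp continuous_id
  -- total mass is 1
  have htot : ∀ b ∈ Set.Icc (0:ℝ) 1, ((bernPow b n).bind A) Set.univ = 1 := by
    intro b hb
    have := bernPow_prob hb.1 hb.2 n
    rw [Measure.bind_apply MeasurableSet.univ hA.aemeasurable]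
    simp [measure_univ]
  -- key: if g (v 0) b > 1/3 then v b = v 0
  have key : ∀ b ∈ Set.Icc (0:ℝ) 1, (1/3 : ℝ≥0∞) < g (v 0) b → v b = v 0 := by
    intro b hb hgt
    by_contra hne
    have h2 := (h b hb).2
    have hdisj : Disjoint ({v 0} : Set ℝ) {v b} := by
      exact Set.disjoint_singleton.mpr fun hh => hne hh.symm
    have hle : g (v 0) b + g (v b) b ≤ 1 := by
      rw [hgdef]
      simp only
      rw [← measure_union hdisj (measurableSet_singleton _)]
      rw [← htot b hb]
      exact measure_mono (Set.subset_univ _)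
    have hlt : (1 : ℝ≥0∞) < g (v 0) b + g (v b) b := by
      have h13 : (1:ℝ≥0∞) = 1/3 + 2/3 := by
        rw [ENNReal.div_add_div_same, show (1:ℝ≥0∞)+2 = 3 by norm_num,
          ENNReal.div_self] <;> norm_num
      calc (1:ℝ≥0∞) = 1/3 + 2/3 := h13
        _ < g (v 0) b + g (v b) b :=
            ENNReal.add_lt_add_of_lt_of_le
              (ENNReal.div_lt_top (by norm_num) (by norm_num)).ne hgt h2
    exact absurd hle (not_le.mpr hlt)
  -- the set where the canonical value is v 0
  set S : Set ℝ := {b | b ∈ Set.Icc (0:ℝ) 1 ∧ (2/3 : ℝ≥0∞) ≤ g (v 0) b} with hSdef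
  have hSclosed : IsClosed S := by
    have : S = Set.Icc (0:ℝ) 1 ∩ (g (v 0)) ⁻¹' Set.Ici (2/3) := by
      ext b; simp [hSdef, Set.mem_Icc, and_assoc]
    rw [this]
    exact isClosed_Icc.inter (isClosed_Ici.preimage (hcont _))
  have h0S : (0:ℝ) ∈ S := by
    refine ⟨⟨le_refl _, zero_le_one⟩, (h 0 ⟨le_refl _, zero_le_one⟩).2⟩
  have hbdd : BddAbove S := ⟨1, fun b hb => hb.1.2⟩
  set c : ℝ := sSup S with hcdef
  have hcS : c ∈ S := hSclosed.csSup_mem ⟨0, h0S⟩ hbdd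
  have hc1 : c ≤ 1 := csSup_le ⟨0, h0S⟩ fun b hb => hb.1.2
  have hceq1 : c = 1 := by
    by_contra hne
    have hclt : c < 1 := lt_of_le_of_ne hc1 hne
    -- find b > c still in S
    have hU : IsOpen ((g (v 0)) ⁻¹' Set.Ioi (1/3)) := (isOpen_Ioi).preimage (hcont _)
    have hcU : c ∈ (g (v 0)) ⁻¹' Set.Ioi (1/3) := by
      refine Set.mem_preimage.mpr ?_
      exact lt_of_lt_of_le (by
        rw [ENNReal.div_lt_iff (by norm_num) (by norm_num), ENNReal.div_mul_cancel] <;>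
          norm_num) hcS.2
    obtain ⟨δ, hδ, hball⟩ := Metric.isOpen_iff.mp hU c hcU
    set b : ℝ := min 1 (c + δ/2) with hbdef
    have hcb : c < b := by
      apply lt_min hclt
      linarith
    have hbU : b ∈ (g (v 0)) ⁻¹' Set.Ioi (1/3) := by
      apply hball
      rw [Metric.mem_ball, Real.dist_eq, abs_lt]
      constructor
      · have : c ≤ b := le_of_lt hcb
        linarith
      · have : b ≤ c + δ/2 := min_le_right _ _
        linarith
    have hbIcc : b ∈ Set.Icc (0:ℝ) 1 := by
      constructor
      · have : (0:ℝ) ≤ c := le_csSup hbdd h0S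
        exact le_of_lt (lt_of_le_of_lt this hcb)
      · exact min_le_left _ _
    have hvb : v b = v 0 := key b hbIcc hbU
    have hbS : b ∈ S := ⟨hbIcc, hvb ▸ (h b hbIcc).2⟩
    exact absurd (le_csSup hbdd hbS) (not_le.mpr hcb)
  -- conclude v 1 = v 0
  have hv1 : v 1 = v 0 := by
    apply key 1 ⟨zero_le_one, le_refl _⟩
    refine lt_of_lt_of_le ?_ (hceq1 ▸ hcS.2)
    rw [ENNReal.div_lt_iff (by norm_num) (by norm_num), ENNReal.div_mul_cancel] <;> norm_num
  have h0 := (h 0 ⟨le_refl _, zero_le_one⟩).1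
  have h1 := (h 1 ⟨zero_le_one, le_refl _⟩).1
  rw [hv1] at h1
  rw [abs_le] at h0 h1
  simp only [sub_zero] at h0
  linarith [h0.1, h0.2, h1.1, h1.2]
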